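/- arXiv:math/0602166 — 2 statements merged into one kernel-verified Lean document; each statement's English description precedes it below -/
import Mathlib

section
/- No root of the polynomial g(t) = 3t¹⁸ + 5t¹⁷ + 6t¹⁶ + 5t¹⁵ + 5t¹⁴ + 6t¹³ − 6t¹¹ − 5t¹⁰ − 6t⁹ − 5t⁸ − 6t⁷ + 6t⁵ + 5t⁴ + 5t³ + 6t² + 5t + 3 in ℂ is a root of unity. -/
open Polynomial

noncomputable def gPolC : Polynomial ℂ :=
  3 * X ^ 18 + 5 * X ^ 17 + 6 * X ^ 16 + 5 * X ^ 15 + 5 * X ^ 14 + 6 * X ^ 13 -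
    6 * X ^ 11 - 5 * X ^ 10 - 6 * X ^ 9 - 5 * X ^ 8 - 6 * X ^ 7 +
    6 * X ^ 5 + 5 * X ^ 4 + 5 * X ^ 3 + 6 * X ^ 2 + 5 * X + 3

private theorem stepEven (t v w e : ℕ) (he : e = 2 * t) (h : (11:ℕ) ^ t % 324908719799 = v)
    (hw : v * v % 324908719799 = w) : (11:ℕ) ^ e % 324908719799 = w := by
  subst he; rw [two_mul, pow_add, Nat.mul_mod, h, hw]

private theorem stepOdd (t v w e : ℕ) (he : e = 2 * t + 1) (h : (11:ℕ) ^ t % 324908719799 = v)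
    (hw : v * v % 324908719799 * 11 % 324908719799 = w) :
    (11:ℕ) ^ e % 324908719799 = w := by
  subst he
  have h2 : (11:ℕ) ^ (2 * t) % 324908719799 = v * v % 324908719799 := by
    rw [two_mul, pow_add, Nat.mul_mod, h]
  rw [pow_succ, Nat.mul_mod, h2, (by norm_num : (11:ℕ) % 324908719799 = 11), hw]

private theorem zpow_eq (e v : ℕ) (h : (11:ℕ) ^ e % 324908719799 = v) :
    (11 : ZMod 324908719799) ^ e = ((v : ℕ) : ZMod 324908719799) := by
  have h11 : ((11:ℕ) : ZMod 324908719799) = (11 : ZMod 324908719799) := by norm_cast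
  rw [← h11, ← Nat.cast_pow, ← h, ZMod.natCast_mod]

private theorem cast_ne_one (v : ℕ) (hlt : v < 324908719799) (hne : v ≠ 1) :
    ((v : ℕ) : ZMod 324908719799) ≠ 1 := by
  haveI : Fact (1 < 324908719799) := ⟨by norm_num⟩
  intro h
  have h2 := congrArg ZMod.val h
  rw [ZMod.val_natCast_of_lt hlt, ZMod.val_one] at h2
  exact hne h2

private theorem bigPrime : Nat.Prime 324908719799 := by
  have h1 : (11:ℕ) ^ 1 % 324908719799 = 11 := by norm_num
  have h2 : (11:ℕ) ^ 2 % 324908719799 = 121 := stepEven 1 11 121 _ (by norm_num) h1 (by norm_num)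
  have h4 : (11:ℕ) ^ 4 % 324908719799 = 14641 := stepEven 2 121 14641 _ (by norm_num) h2 (by norm_num)
  have h9 : (11:ℕ) ^ 9 % 324908719799 = 2357947691 := stepOdd 4 14641 2357947691 _ (by norm_num) h4 (by norm_num)
  have h18 : (11:ℕ) ^ 18 % 324908719799 = 22564112525 := stepEven 9 2357947691 22564112525 _ (by norm_num) h9 (by norm_num)
  have h37 : (11:ℕ) ^ 37 % 324908719799 = 80888536578 := stepOdd 18 22564112525 80888536578 _ (by norm_num) h18 (by norm_num)
  have h75 : (11:ℕ) ^ 75 % 324908719799 = 940672186 := stepOdd 37 80888536578 940672186 _ (by norm_num) h37 (by norm_num)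
  have h151 : (11:ℕ) ^ 151 % 324908719799 = 168063054618 := stepOdd 75 940672186 168063054618 _ (by norm_num) h75 (by norm_num)
  have h302 : (11:ℕ) ^ 302 % 324908719799 = 267746146758 := stepEven 151 168063054618 267746146758 _ (by norm_num) h151 (by norm_num)
  have h605 : (11:ℕ) ^ 605 % 324908719799 = 107139328005 := stepOdd 302 267746146758 107139328005 _ (by norm_num) h302 (by norm_num)
  have h1210 : (11:ℕ) ^ 1210 % 324908719799 = 185718550091 := stepEven 605 107139328005 185718550091 _ (by norm_num) h605 (by norm_num)
  have h2420 : (11:ℕ) ^ 2420 % 324908719799 = 234458552612 := stepEven 1210 185718550091 234458552612 _ (by norm_num) h1210 (by norm_num)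
  have h4841 : (11:ℕ) ^ 4841 % 324908719799 = 197674279465 := stepOdd 2420 234458552612 197674279465 _ (by norm_num) h2420 (by norm_num)
  have h9683 : (11:ℕ) ^ 9683 % 324908719799 = 320584009051 := stepOdd 4841 197674279465 320584009051 _ (by norm_num) h4841 (by norm_num)
  have h19366 : (11:ℕ) ^ 19366 % 324908719799 = 179081771342 := stepEven 9683 320584009051 179081771342 _ (by norm_num) h9683 (by norm_num)
  have h38732 : (11:ℕ) ^ 38732 % 324908719799 = 112906511166 := stepEven 19366 179081771342 112906511166 _ (by norm_num) h19366 (by norm_num)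
  have h77464 : (11:ℕ) ^ 77464 % 324908719799 = 255643759422 := stepEven 38732 112906511166 255643759422 _ (by norm_num) h38732 (by norm_num)
  have h154928 : (11:ℕ) ^ 154928 % 324908719799 = 228194296801 := stepEven 77464 255643759422 228194296801 _ (by norm_num) h77464 (by norm_num)
  have h309857 : (11:ℕ) ^ 309857 % 324908719799 = 245831196178 := stepOdd 154928 228194296801 245831196178 _ (by norm_num) h154928 (by norm_num)
  have h619714 : (11:ℕ) ^ 619714 % 324908719799 = 286891170388 := stepEven 309857 245831196178 286891170388 _ (by norm_num) h309857 (by norm_num)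
  have h1239428 : (11:ℕ) ^ 1239428 % 324908719799 = 305324943649 := stepEven 619714 286891170388 305324943649 _ (by norm_num) h619714 (by norm_num)
  have h2478856 : (11:ℕ) ^ 2478856 % 324908719799 = 214348401564 := stepEven 1239428 305324943649 214348401564 _ (by norm_num) h1239428 (by norm_num)
  have h4957713 : (11:ℕ) ^ 4957713 % 324908719799 = 180930930717 := stepOdd 2478856 214348401564 180930930717 _ (by norm_num) h2478856 (by norm_num)
  have h9915427 : (11:ℕ) ^ 9915427 % 324908719799 = 157352017146 := stepOdd 4957713 180930930717 157352017146 _ (by norm_num) h4957713 (by norm_num)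
  have h19830854 : (11:ℕ) ^ 19830854 % 324908719799 = 122382391929 := stepEven 9915427 157352017146 122382391929 _ (by norm_num) h9915427 (by norm_num)
  have h39661708 : (11:ℕ) ^ 39661708 % 324908719799 = 165950330548 := stepEven 19830854 122382391929 165950330548 _ (by norm_num) h19830854 (by norm_num)
  have h79323417 : (11:ℕ) ^ 79323417 % 324908719799 = 314141993826 := stepOdd 39661708 165950330548 314141993826 _ (by norm_num) h39661708 (by norm_num)
  have h158646835 : (11:ℕ) ^ 158646835 % 324908719799 = 102469166083 := stepOdd 79323417 314141993826 102469166083 _ (by norm_num) h79323417 (by norm_num)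
  have h317293671 : (11:ℕ) ^ 317293671 % 324908719799 = 127637827922 := stepOdd 158646835 102469166083 127637827922 _ (by norm_num) h158646835 (by norm_num)
  have h634587343 : (11:ℕ) ^ 634587343 % 324908719799 = 3753912925 := stepOdd 317293671 127637827922 3753912925 _ (by norm_num) h317293671 (by norm_num)
  have h1269174686 : (11:ℕ) ^ 1269174686 % 324908719799 = 206178738782 := stepEven 634587343 3753912925 206178738782 _ (by norm_num) h634587343 (by norm_num)
  have h2538349373 : (11:ℕ) ^ 2538349373 % 324908719799 = 193502157335 := stepOdd 1269174686 206178738782 193502157335 _ (by norm_num) h1269174686 (by norm_num)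
  have h5076698746 : (11:ℕ) ^ 5076698746 % 324908719799 = 157339652481 := stepEven 2538349373 193502157335 157339652481 _ (by norm_num) h2538349373 (by norm_num)
  have h10153397493 : (11:ℕ) ^ 10153397493 % 324908719799 = 206214525002 := stepOdd 5076698746 157339652481 206214525002 _ (by norm_num) h5076698746 (by norm_num)
  have h20306794987 : (11:ℕ) ^ 20306794987 % 324908719799 = 98807047551 := stepOdd 10153397493 206214525002 98807047551 _ (by norm_num) h10153397493 (by norm_num)
  have h40613589974 : (11:ℕ) ^ 40613589974 % 324908719799 = 223344539589 := stepEven 20306794987 98807047551 223344539589 _ (by norm_num) h20306794987 (by norm_num)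
  have h81227179949 : (11:ℕ) ^ 81227179949 % 324908719799 = 217599813085 := stepOdd 40613589974 223344539589 217599813085 _ (by norm_num) h40613589974 (by norm_num)
  have h162454359899 : (11:ℕ) ^ 162454359899 % 324908719799 = 324908719798 := stepOdd 81227179949 217599813085 324908719798 _ (by norm_num) h81227179949 (by norm_num)
  have h324908719798 : (11:ℕ) ^ 324908719798 % 324908719799 = 1 := stepEven 162454359899 324908719798 1 _ (by norm_num) h162454359899 (by norm_num)
  have h5 : (11:ℕ) ^ 5 % 324908719799 = 161051 := stepOdd 2 121 161051 _ (by norm_num) h2 (by norm_num)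
  have h11 : (11:ℕ) ^ 11 % 324908719799 = 285311670611 := stepOdd 5 161051 285311670611 _ (by norm_num) h5 (by norm_num)
  have h23 : (11:ℕ) ^ 23 % 324908719799 = 193764031759 := stepOdd 11 285311670611 193764031759 _ (by norm_num) h11 (by norm_num)
  have h46 : (11:ℕ) ^ 46 % 324908719799 = 29869750497 := stepEven 23 193764031759 29869750497 _ (by norm_num) h23 (by norm_num)
  have h93 : (11:ℕ) ^ 93 % 324908719799 = 249688691422 := stepOdd 46 29869750497 249688691422 _ (by norm_num) h46 (by norm_num)
  have h186 : (11:ℕ) ^ 186 % 324908719799 = 40962786170 := stepEven 93 249688691422 40962786170 _ (by norm_num) h93 (by norm_num)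
  have h372 : (11:ℕ) ^ 372 % 324908719799 = 273202580794 := stepEven 186 40962786170 273202580794 _ (by norm_num) h186 (by norm_num)
  have h744 : (11:ℕ) ^ 744 % 324908719799 = 305627345697 := stepEven 372 273202580794 305627345697 _ (by norm_num) h372 (by norm_num)
  have h1489 : (11:ℕ) ^ 1489 % 324908719799 = 33572788903 := stepOdd 744 305627345697 33572788903 _ (by norm_num) h744 (by norm_num)
  have h2979 : (11:ℕ) ^ 2979 % 324908719799 = 62457895258 := stepOdd 1489 33572788903 62457895258 _ (by norm_num) h1489 (by norm_num)
  have h5958 : (11:ℕ) ^ 5958 % 324908719799 = 289324068603 := stepEven 2979 62457895258 289324068603 _ (by norm_num) h2979 (by norm_num)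
  have h11917 : (11:ℕ) ^ 11917 % 324908719799 = 301340917682 := stepOdd 5958 289324068603 301340917682 _ (by norm_num) h5958 (by norm_num)
  have h23835 : (11:ℕ) ^ 23835 % 324908719799 = 35922280523 := stepOdd 11917 301340917682 35922280523 _ (by norm_num) h11917 (by norm_num)
  have h47670 : (11:ℕ) ^ 47670 % 324908719799 = 146556384843 := stepEven 23835 35922280523 146556384843 _ (by norm_num) h23835 (by norm_num)
  have h95340 : (11:ℕ) ^ 95340 % 324908719799 = 298764232226 := stepEven 47670 146556384843 298764232226 _ (by norm_num) h47670 (by norm_num)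
  have h190681 : (11:ℕ) ^ 190681 % 324908719799 = 290755696914 := stepOdd 95340 298764232226 290755696914 _ (by norm_num) h95340 (by norm_num)
  have h381362 : (11:ℕ) ^ 381362 % 324908719799 = 3267288348 := stepEven 190681 290755696914 3267288348 _ (by norm_num) h190681 (by norm_num)
  have h762725 : (11:ℕ) ^ 762725 % 324908719799 = 178063487204 := stepOdd 381362 3267288348 178063487204 _ (by norm_num) h381362 (by norm_num)
  have h1525450 : (11:ℕ) ^ 1525450 % 324908719799 = 233799681162 := stepEven 762725 178063487204 233799681162 _ (by norm_num) h762725 (by norm_num)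
  have h3050900 : (11:ℕ) ^ 3050900 % 324908719799 = 272557203931 := stepEven 1525450 233799681162 272557203931 _ (by norm_num) h1525450 (by norm_num)
  have h6101801 : (11:ℕ) ^ 6101801 % 324908719799 = 269622610184 := stepOdd 3050900 272557203931 269622610184 _ (by norm_num) h3050900 (by norm_num)
  have h12203602 : (11:ℕ) ^ 12203602 % 324908719799 = 117029165695 := stepEven 6101801 269622610184 117029165695 _ (by norm_num) h6101801 (by norm_num)
  have h24407205 : (11:ℕ) ^ 24407205 % 324908719799 = 217396817086 := stepOdd 12203602 117029165695 217396817086 _ (by norm_num) h12203602 (by norm_num)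
  have h48814411 : (11:ℕ) ^ 48814411 % 324908719799 = 76477072675 := stepOdd 24407205 217396817086 76477072675 _ (by norm_num) h24407205 (by norm_num)
  have h97628822 : (11:ℕ) ^ 97628822 % 324908719799 = 135946016092 := stepEven 48814411 76477072675 135946016092 _ (by norm_num) h48814411 (by norm_num)
  have h195257644 : (11:ℕ) ^ 195257644 % 324908719799 = 266855266164 := stepEven 97628822 135946016092 266855266164 _ (by norm_num) h97628822 (by norm_num)
  have h390515288 : (11:ℕ) ^ 390515288 % 324908719799 = 297686798601 := stepEven 195257644 266855266164 297686798601 _ (by norm_num) h195257644 (by norm_num)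
  have h781030576 : (11:ℕ) ^ 781030576 % 324908719799 = 81799955897 := stepEven 390515288 297686798601 81799955897 _ (by norm_num) h390515288 (by norm_num)
  have h1562061152 : (11:ℕ) ^ 1562061152 % 324908719799 = 274959966706 := stepEven 781030576 81799955897 274959966706 _ (by norm_num) h781030576 (by norm_num)
  have h3124122305 : (11:ℕ) ^ 3124122305 % 324908719799 = 117163811804 := stepOdd 1562061152 274959966706 117163811804 _ (by norm_num) h1562061152 (by norm_num)
  have h6248244611 : (11:ℕ) ^ 6248244611 % 324908719799 = 16449043460 := stepOdd 3124122305 117163811804 16449043460 _ (by norm_num) h3124122305 (by norm_num)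
  have h12496489223 : (11:ℕ) ^ 12496489223 % 324908719799 = 305438835331 := stepOdd 6248244611 16449043460 305438835331 _ (by norm_num) h6248244611 (by norm_num)
  have h24992978446 : (11:ℕ) ^ 24992978446 % 324908719799 = 99212322237 := stepEven 12496489223 305438835331 99212322237 _ (by norm_num) h12496489223 (by norm_num)
  have h3 : (11:ℕ) ^ 3 % 324908719799 = 1331 := stepOdd 1 11 1331 _ (by norm_num) h1 (by norm_num)
  have h7 : (11:ℕ) ^ 7 % 324908719799 = 19487171 := stepOdd 3 1331 19487171 _ (by norm_num) h3 (by norm_num)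
  have h15 : (11:ℕ) ^ 15 % 324908719799 = 221667679707 := stepOdd 7 19487171 221667679707 _ (by norm_num) h7 (by norm_num)
  have h30 : (11:ℕ) ^ 30 % 324908719799 = 104467936646 := stepEven 15 221667679707 104467936646 _ (by norm_num) h15 (by norm_num)
  have h60 : (11:ℕ) ^ 60 % 324908719799 = 296896283350 := stepEven 30 104467936646 296896283350 _ (by norm_num) h30 (by norm_num)
  have h120 : (11:ℕ) ^ 120 % 324908719799 = 154693695383 := stepEven 60 296896283350 154693695383 _ (by norm_num) h60 (by norm_num)
  have h241 : (11:ℕ) ^ 241 % 324908719799 = 192923587872 := stepOdd 120 154693695383 192923587872 _ (by norm_num) h120 (by norm_num)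
  have h483 : (11:ℕ) ^ 483 % 324908719799 = 265995792329 := stepOdd 241 192923587872 265995792329 _ (by norm_num) h241 (by norm_num)
  have h966 : (11:ℕ) ^ 966 % 324908719799 = 109081090052 := stepEven 483 265995792329 109081090052 _ (by norm_num) h483 (by norm_num)
  have h1933 : (11:ℕ) ^ 1933 % 324908719799 = 243509095482 := stepOdd 966 109081090052 243509095482 _ (by norm_num) h966 (by norm_num)
  have h3867 : (11:ℕ) ^ 3867 % 324908719799 = 179118926828 := stepOdd 1933 243509095482 179118926828 _ (by norm_num) h1933 (by norm_num)
  have h7734 : (11:ℕ) ^ 7734 % 324908719799 = 267512543632 := stepEven 3867 179118926828 267512543632 _ (by norm_num) h3867 (by norm_num)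
  have h15468 : (11:ℕ) ^ 15468 % 324908719799 = 221482781838 := stepEven 7734 267512543632 221482781838 _ (by norm_num) h7734 (by norm_num)
  have h30937 : (11:ℕ) ^ 30937 % 324908719799 = 1722643526 := stepOdd 15468 221482781838 1722643526 _ (by norm_num) h15468 (by norm_num)
  have h61874 : (11:ℕ) ^ 61874 % 324908719799 = 210415593212 := stepEven 30937 1722643526 210415593212 _ (by norm_num) h30937 (by norm_num)
  have h123749 : (11:ℕ) ^ 123749 % 324908719799 = 12175000725 := stepOdd 61874 210415593212 12175000725 _ (by norm_num) h61874 (by norm_num)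
  have h247498 : (11:ℕ) ^ 247498 % 324908719799 = 227948832045 := stepEven 123749 12175000725 227948832045 _ (by norm_num) h123749 (by norm_num)
  have h494997 : (11:ℕ) ^ 494997 % 324908719799 = 16418875973 := stepOdd 247498 227948832045 16418875973 _ (by norm_num) h247498 (by norm_num)
  have h989995 : (11:ℕ) ^ 989995 % 324908719799 = 161007456621 := stepOdd 494997 16418875973 161007456621 _ (by norm_num) h494997 (by norm_num)
  have h1979991 : (11:ℕ) ^ 1979991 % 324908719799 = 180555714849 := stepOdd 989995 161007456621 180555714849 _ (by norm_num) h989995 (by norm_num)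
  have h3959983 : (11:ℕ) ^ 3959983 % 324908719799 = 81093214388 := stepOdd 1979991 180555714849 81093214388 _ (by norm_num) h1979991 (by norm_num)
  have h7919966 : (11:ℕ) ^ 7919966 % 324908719799 = 296449330386 := stepEven 3959983 81093214388 296449330386 _ (by norm_num) h3959983 (by norm_num)
  have h15839933 : (11:ℕ) ^ 15839933 % 324908719799 = 17812317653 := stepOdd 7919966 296449330386 17812317653 _ (by norm_num) h7919966 (by norm_num)
  have h31679867 : (11:ℕ) ^ 31679867 % 324908719799 = 153429246774 := stepOdd 15839933 17812317653 153429246774 _ (by norm_num) h15839933 (by norm_num)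
  have h63359734 : (11:ℕ) ^ 63359734 % 324908719799 = 83100332901 := stepEven 31679867 153429246774 83100332901 _ (by norm_num) h31679867 (by norm_num)
  have h126719469 : (11:ℕ) ^ 126719469 % 324908719799 = 38055534135 := stepOdd 63359734 83100332901 38055534135 _ (by norm_num) h63359734 (by norm_num)
  have h253438939 : (11:ℕ) ^ 253438939 % 324908719799 = 216868482926 := stepOdd 126719469 38055534135 216868482926 _ (by norm_num) h126719469 (by norm_num)
  have h506877878 : (11:ℕ) ^ 506877878 % 324908719799 = 188335539797 := stepEven 253438939 216868482926 188335539797 _ (by norm_num) h253438939 (by norm_num)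
  have h8 : (11:ℕ) ^ 8 % 324908719799 = 214358881 := stepEven 4 14641 214358881 _ (by norm_num) h4 (by norm_num)
  have h16 : (11:ℕ) ^ 16 % 324908719799 = 163983438184 := stepEven 8 214358881 163983438184 _ (by norm_num) h8 (by norm_num)
  have h32 : (11:ℕ) ^ 32 % 324908719799 = 294088981804 := stepEven 16 163983438184 294088981804 _ (by norm_num) h16 (by norm_num)
  have h65 : (11:ℕ) ^ 65 % 324908719799 = 251580581015 := stepOdd 32 294088981804 251580581015 _ (by norm_num) h32 (by norm_num)
  have h130 : (11:ℕ) ^ 130 % 324908719799 = 246794250754 := stepEven 65 251580581015 246794250754 _ (by norm_num) h65 (by norm_num)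
  have h260 : (11:ℕ) ^ 260 % 324908719799 = 126122936748 := stepEven 130 246794250754 126122936748 _ (by norm_num) h130 (by norm_num)
  have h520 : (11:ℕ) ^ 520 % 324908719799 = 92493623187 := stepEven 260 126122936748 92493623187 _ (by norm_num) h260 (by norm_num)
  have h1041 : (11:ℕ) ^ 1041 % 324908719799 = 190715820655 := stepOdd 520 92493623187 190715820655 _ (by norm_num) h520 (by norm_num)
  have h2083 : (11:ℕ) ^ 2083 % 324908719799 = 304439309277 := stepOdd 1041 190715820655 304439309277 _ (by norm_num) h1041 (by norm_num)
  have h4166 : (11:ℕ) ^ 4166 % 324908719799 = 315070978700 := stepEven 2083 304439309277 315070978700 _ (by norm_num) h2083 (by norm_num)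
  have h8333 : (11:ℕ) ^ 8333 % 324908719799 = 30634387771 := stepOdd 4166 315070978700 30634387771 _ (by norm_num) h4166 (by norm_num)
  have h16666 : (11:ℕ) ^ 16666 % 324908719799 = 108931477295 := stepEven 8333 30634387771 108931477295 _ (by norm_num) h8333 (by norm_num)
  apply lucas_primality 324908719799 (11 : ZMod 324908719799)
  · rw [(by norm_num : (324908719799 : ℕ) - 1 = 324908719798),
      zpow_eq _ _ h324908719798, Nat.cast_one]
  · intro q hq hdvd
    rw [(by norm_num : (324908719799 : ℕ) - 1 = 324908719798)] at hdvd
    rw [(by norm_num : (324908719798 : ℕ) = 2 * (13 * (641 * 19495303)))] at hdvd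
    have hq2 : Nat.Prime 2 := by norm_num
    have hq13 : Nat.Prime 13 := by norm_num
    have hq641 : Nat.Prime 641 := by norm_num
    have hq3 : Nat.Prime 19495303 := by norm_num
    rcases (Nat.Prime.dvd_mul hq).mp hdvd with h | h
    · rw [(Nat.prime_dvd_prime_iff_eq hq hq2).mp h,
        (by norm_num : ((324908719799 : ℕ) - 1) / 2 = 162454359899),
        zpow_eq _ _ h162454359899]
      exact cast_ne_one _ (by norm_num) (by norm_num)
    rcases (Nat.Prime.dvd_mul hq).mp h with h | h
    · rw [(Nat.prime_dvd_prime_iff_eq hq hq13).mp h,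
        (by norm_num : ((324908719799 : ℕ) - 1) / 13 = 24992978446),
        zpow_eq _ _ h24992978446]
      exact cast_ne_one _ (by norm_num) (by norm_num)
    rcases (Nat.Prime.dvd_mul hq).mp h with h | h
    · rw [(Nat.prime_dvd_prime_iff_eq hq hq641).mp h,
        (by norm_num : ((324908719799 : ℕ) - 1) / 641 = 506877878),
        zpow_eq _ _ h506877878]
      exact cast_ne_one _ (by norm_num) (by norm_num)
    · rw [(Nat.prime_dvd_prime_iff_eq hq hq3).mp h,
        (by norm_num : ((324908719799 : ℕ) - 1) / 19495303 = 16666),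
        zpow_eq _ _ h16666]
      exact cast_ne_one _ (by norm_num) (by norm_num)

noncomputable def gZaux : Polynomial ℤ :=
  3 * X ^ 18 + 5 * X ^ 17 + 6 * X ^ 16 + 5 * X ^ 15 + 5 * X ^ 14 + 6 * X ^ 13 -
    6 * X ^ 11 - 5 * X ^ 10 - 6 * X ^ 9 - 5 * X ^ 8 - 6 * X ^ 7 +
    6 * X ^ 5 + 5 * X ^ 4 + 5 * X ^ 3 + 6 * X ^ 2 + 5 * X + 3

theorem stmt_10 (z : ℂ) (hz : gPolC.eval z = 0) : ∀ n : ℕ, 0 < n → z ^ n ≠ 1 := by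
  intro n hn hzn
  have hfin : IsOfFinOrder z := isOfFinOrder_iff_pow_eq_one.mpr ⟨n, hn, hzn⟩
  set d := orderOf z with hd_def
  have hd : 0 < d := hfin.orderOf_pos
  have hprim : IsPrimitiveRoot z d := IsPrimitiveRoot.orderOf z
  have hint : IsIntegral ℤ z := hprim.isIntegral hd
  -- transfer the root to the integer polynomial
  have hmapg : gZaux.map (Int.castRingHom ℂ) = gPolC := by
    simp [gZaux, gPolC, Polynomial.map_add, Polynomial.map_sub, Polynomial.map_mul,
      Polynomial.map_pow, Polynomial.map_ofNat]
  have haeval : Polynomial.aeval z gZaux = 0 := by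
    rw [aeval_def, ← eval_map, algebraMap_int_eq, hmapg]
    exact hz
  have hdvd : cyclotomic d ℤ ∣ gZaux := by
    rw [cyclotomic_eq_minpoly hprim hd]
    exact minpoly.isIntegrallyClosed_dvd hint haeval
  obtain ⟨k, hk⟩ := hdvd
  set c : ℤ := (cyclotomic d ℤ).eval 4 with hc_def
  have hg4 : gZaux.eval 4 = 324908719799 := by simp [gZaux]
  have heval : c * k.eval 4 = 324908719799 := by
    rw [hc_def, ← eval_mul, ← hk, hg4]
  -- real value of c
  have hcast : ((c : ℤ) : ℝ) = (cyclotomic d ℝ).eval 4 := by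
    have h := cyclotomic.eval_apply (4 : ℤ) d (algebraMap ℤ ℝ)
    simpa using h.symm
  have hlow : (3 : ℝ) ^ d.totient ≤ ((c : ℤ) : ℝ) := by
    have h := sub_one_pow_totient_le_cyclotomic_eval (q := 4) (by norm_num) d
    rw [hcast]
    convert h using 2
    norm_num
  have hups : ((c : ℤ) : ℝ) ≤ (5 : ℝ) ^ d.totient := by
    have h := cyclotomic_eval_le_add_one_pow_totient (q := 4) (by norm_num) d
    rw [hcast]
    convert h using 2
    norm_num
  have htotpos : 1 ≤ d.totient := Nat.totient_pos.mpr hd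
  have hc3 : (3 : ℤ) ≤ c := by
    have : (3 : ℝ) ≤ ((c : ℤ) : ℝ) := by
      calc (3:ℝ) = 3 ^ 1 := (pow_one 3).symm
      _ ≤ 3 ^ d.totient := pow_le_pow_right₀ (by norm_num) htotpos
      _ ≤ _ := hlow
    exact_mod_cast this
  -- c divides the prime value, hence c = it
  have hcdvd : c ∣ 324908719799 := ⟨k.eval 4, heval.symm⟩
  have hceq : c = 324908719799 := by
    have h1 : c.natAbs ∣ 324908719799 := by
      have := Int.natAbs_dvd_natAbs.mpr hcdvd
      simpa using this
    rcases bigPrime.eq_one_or_self_of_dvd _ h1 with h | h <;> omega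
  -- totient bounds
  have hub17 : 17 ≤ d.totient := by
    by_contra h
    push_neg at h
    have h16 : d.totient ≤ 16 := by omega
    have : ((c : ℤ) : ℝ) ≤ (5 : ℝ) ^ 16 :=
      hups.trans (pow_le_pow_right₀ (by norm_num) h16)
    rw [hceq] at this
    norm_num at this
  have hgz_ne : gZaux ≠ 0 := by
    intro h0
    rw [h0] at hg4
    simp at hg4
  have hgdeg : gZaux.natDegree = 18 := by unfold gZaux; compute_degree!
  have hdeg18 : d.totient ≤ 18 := by
    have := Polynomial.natDegree_le_of_dvd ⟨k, hk⟩ hgz_ne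
    rwa [natDegree_cyclotomic, hgdeg] at this
  -- totient is 17 or 18; 17 is impossible by parity
  have hd2 : 2 < d := by
    have ht := Nat.totient_le d
    omega
  have heven : Even d.totient := Nat.totient_even hd2
  have h18 : d.totient = 18 := by
    rcases Nat.even_iff.mp heven with h
    omega
  -- then k is the constant 1, so gZaux is cyclotomic, contradiction at 0
  have hk_ne : k ≠ 0 := by
    intro h0
    rw [h0, eval_zero, mul_zero] at heval
    norm_num at heval
  have hcyc_ne : cyclotomic d ℤ ≠ 0 := cyclotomic_ne_zero d ℤ
  have hkdeg : k.natDegree = 0 := by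
    have := Polynomial.natDegree_mul hcyc_ne hk_ne
    rw [← hk, hgdeg, natDegree_cyclotomic, h18] at this
    omega
  have hkC : k = C (k.coeff 0) := Polynomial.eq_C_of_natDegree_eq_zero hkdeg
  have hkval : k.eval 4 = 1 := by
    rw [hceq] at heval
    have : (324908719799 : ℤ) * k.eval 4 = 324908719799 * 1 := by linarith
    exact mul_left_cancel₀ (by norm_num) this
  have hk1 : k = 1 := by
    rw [hkC] at hkval ⊢
    rw [eval_C] at hkval
    rw [hkval, map_one]
  rw [hk1, mul_one] at hk
  -- evaluate at 0: gZaux(0) = 3 but cyclotomic(0) = 1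
  have h0 : gZaux.coeff 0 = 3 := by
    rw [Polynomial.coeff_zero_eq_eval_zero]
    simp [gZaux]
  rw [hk, cyclotomic_coeff_zero _ (by omega : 1 < d)] at h0
  norm_num at h0
end

section
/- Let γ = (1+√5)/2. If (a₁,a₂,a₃) ∈ ℝ³ satisfies the linear system (a₁,a₂,a₃)·A = (h₁,h₂,h₃) with A = (γ/2)·[[γ², γ², γ],[γ, −1, γ²],[−1, γ, −1]], and |h₁ − 1.7986781| ≤ 0.05, |h₂ − 2.1332721| ≤ 0.05, |h₃ − 1.8679467| ≤ 0.05, then (γ/2)·(−a₁ + γ·a₂ + γ²·a₃) > 1.0364196 + 0.05, i.e., the value predicted for the fourth height is inconsistent with its estimate. -/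
theorem stmt_16 (γ : ℝ) (hγ : γ = (1 + Real.sqrt 5) / 2)
    (A : Matrix (Fin 3) (Fin 3) ℝ)
    (hA : A = (γ / 2) • !![γ ^ 2, γ ^ 2, γ; γ, -1, γ ^ 2; -1, γ, -1])
    (a h : Fin 3 → ℝ) (hsys : Matrix.vecMul a A = h)
    (h1 : |h 0 - 1.7986781| ≤ 0.05) (h2 : |h 1 - 2.1332721| ≤ 0.05)
    (h3 : |h 2 - 1.8679467| ≤ 0.05) :
    (γ / 2) * (-(a 0) + γ * a 1 + γ ^ 2 * a 2) > 1.0364196 + 0.05 := by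
  have h5 : Real.sqrt 5 ^ 2 = 5 := Real.sq_sqrt (by norm_num)
  have hlo : (2.2360679 : ℝ) < Real.sqrt 5 := by
    nlinarith [Real.sqrt_nonneg 5]
  have hhi : Real.sqrt 5 < 2.2360680 := by
    nlinarith [Real.sqrt_nonneg 5]
  have hq : γ ^ 2 = γ + 1 := by
    rw [hγ]; nlinarith [h5]
  subst hA
  have e0 := congrFun hsys 0
  have e1 := congrFun hsys 1
  have e2 := congrFun hsys 2
  simp [Matrix.vecMul, dotProduct, Fin.sum_univ_three, Matrix.smul_apply] at e0 e1 e2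
  have key : (γ / 2) * (-(a 0) + γ * a 1 + γ ^ 2 * a 2)
      = -4 * h 0 + (3 - γ) * h 1 + (2 + γ) * h 2 := by
    linear_combination (-4) * e0 + (3 - γ) * e1 + (2 + γ) * e2 +
      (γ ^ 2 * a 0 / 2 - γ ^ 2 * a 1 / 2 + γ * a 2 - 3 * γ * a 1 / 2 + γ * a 0 / 2) * hq
  rw [key]
  rw [abs_le] at h1 h2 h3
  have hγlo : (1.6180339 : ℝ) < γ := by rw [hγ]; linarith
  have hγhi : γ < 1.6180340 := by rw [hγ]; linarith
  nlinarith [mul_le_mul_of_nonneg_left h2.1 (by linarith : (0:ℝ) ≤ 3 - γ),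
    mul_le_mul_of_nonneg_left h3.1 (by linarith : (0:ℝ) ≤ 2 + γ), h1.2, h2.1, h3.1]
end
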